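/- arXiv:1302.0033 — 4 statements merged into one kernel-verified Lean document; each statement's English description precedes it below -/
import Mathlib

section
/- Let C be a binary linear code of length n that is invariant under a permutation σ of the coordinates of odd prime order p. Let F_σ(C) = {v ∈ C : vσ = v} and let E_σ(C) be the set of v ∈ C whose restriction to every cycle of σ (including fixed points) has even weight. Then C = F_σ(C) ⊕ E_σ(C), i.e., C is the internal direct sum of these two subspaces. -/
open Finset

lemma aux_even_iff {n : ℕ} (P : Fin n → Prop) [DecidablePred P] (w : Fin n → ZMod 2) :
    Even (Nat.card {i : Fin n // P i ∧ w i ≠ 0}) ↔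
      ∑ i ∈ univ.filter (fun i => P i), w i = 0 := by
  classical
  rw [Nat.card_eq_fintype_card, Fintype.card_subtype]
  have hone : ∀ x : ZMod 2, x ≠ 0 → x = 1 := by decide
  have h1 : ∑ i ∈ univ.filter (fun i => P i), w i
      = ∑ i ∈ univ.filter (fun i => P i ∧ w i ≠ 0), w i := by
    rw [Finset.sum_filter, Finset.sum_filter]
    refine Finset.sum_congr rfl fun i _ => ?_
    by_cases h : P i <;> by_cases h2 : w i = 0 <;> simp [h, h2]
  have h2 : ∑ i ∈ univ.filter (fun i => P i ∧ w i ≠ 0), w i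
      = ((univ.filter (fun i => P i ∧ w i ≠ 0)).card : ZMod 2) := by
    rw [Finset.card_eq_sum_ones, Nat.cast_sum]
    refine Finset.sum_congr rfl fun i hi => ?_
    simp only [mem_filter] at hi
    simp [hone _ hi.2.2]
  rw [h1, h2, ZMod.natCast_eq_zero_iff]
  exact even_iff_two_dvd

lemma aux_odd_card {n p : ℕ} (hp : p.Prime) (hodd : Odd p) (σ : Equiv.Perm (Fin n))
    (hord : orderOf σ = p) (j : Fin n) :
    Odd (Nat.card {i : Fin n // σ.SameCycle j i}) := by
  haveI : Fact p.Prime := ⟨hp⟩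
  have hpg : IsPGroup p (Subgroup.zpowers σ) :=
    IsPGroup.of_card (by rw [Nat.card_zpowers, hord, pow_one])
  obtain ⟨k, hk⟩ := hpg.card_orbit j
  have he : ∀ i, σ.SameCycle j i ↔ i ∈ MulAction.orbit (Subgroup.zpowers σ) j := by
    intro i
    constructor
    · rintro ⟨k, hk⟩
      exact ⟨⟨σ ^ k, Subgroup.zpow_mem _ (Subgroup.mem_zpowers σ) k⟩, hk⟩
    · rintro ⟨⟨g, m⟩, rfl⟩
      obtain ⟨k, rfl⟩ := m
      exact ⟨k, rfl⟩
  have hcard : Nat.card {i : Fin n // σ.SameCycle j i}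
      = Nat.card (MulAction.orbit (Subgroup.zpowers σ) j) :=
    Nat.card_congr (Equiv.subtypeEquivRight he)
  rw [hcard, hk]
  exact hodd.pow


/-- If a binary linear code `C` of length `n` is invariant under a permutation `σ` of
odd prime order `p`, then `C` is the internal direct sum of the fixed subcode
`F_σ(C)` and the subcode `E_σ(C)` of words whose restriction to every cycle of `σ`
has even weight: every `v ∈ C` decomposes uniquely as `v = f + e`. -/
theorem stmt_0 (n p : ℕ) (hp : p.Prime) (hodd : Odd p)
    (σ : Equiv.Perm (Fin n)) (hord : orderOf σ = p)
    (C : Submodule (ZMod 2) (Fin n → ZMod 2))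
    (hinv : ∀ v ∈ C, v ∘ σ ∈ C) :
    ∀ v ∈ C, ∃! fe : (Fin n → ZMod 2) × (Fin n → ZMod 2),
      fe.1 ∈ C ∧ fe.2 ∈ C ∧ fe.1 ∘ σ = fe.1 ∧
      (∀ j : Fin n, Even (Nat.card {i : Fin n // σ.SameCycle j i ∧ fe.2 i ≠ 0})) ∧
      v = fe.1 + fe.2 := by
  classical
  intro v hv
  have hσp : σ ^ p = 1 := by rw [← hord]; exact pow_orderOf_eq_one σ
  have hzadd : ∀ x y : ZMod 2, y + (x + y) = x := by decide
  have hzcancel : ∀ x y : ZMod 2, x + y = 0 → x = y := by decide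
  have hp2 : (p : ZMod 2) = 1 := by
    obtain ⟨m, rfl⟩ := hodd
    push_cast
    have : (2 : ZMod 2) = 0 := by decide
    rw [this]; ring
  -- powers of σ applied to elements of C stay in C
  have hpow : ∀ k : ℕ, (fun i => v ((σ ^ k) i)) ∈ C := by
    intro k
    induction k with
    | zero => simpa using hv
    | succ k ih =>
      have h := hinv _ ih
      have : ((fun i => v ((σ ^ k) i)) ∘ σ) = fun i => v ((σ ^ (k + 1)) i) := by
        funext i; simp [pow_succ, Equiv.Perm.mul_apply, Function.comp]
      rwa [this] at h
  set f : Fin n → ZMod 2 := fun i => ∑ k ∈ Finset.range p, v ((σ ^ k) i) with hf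
  set e : Fin n → ZMod 2 := v + f with he
  have hfC : f ∈ C := by
    have hfe : f = ∑ k ∈ Finset.range p, fun i => v ((σ ^ k) i) := by
      funext i; rw [hf]; simp [Finset.sum_apply]
    rw [hfe]
    exact Submodule.sum_mem _ fun k _ => hpow k
  have heC : e ∈ C := C.add_mem hv hfC
  have hfix : f ∘ σ = f := by
    funext i
    show ∑ k ∈ range p, v ((σ ^ k) (σ i)) = ∑ k ∈ range p, v ((σ ^ k) i)
    set g : ℕ → ZMod 2 := fun k => v ((σ ^ k) i) with hg
    have hshift : ∑ k ∈ range p, v ((σ ^ k) (σ i)) = ∑ k ∈ range p, g (k + 1) := by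
      refine Finset.sum_congr rfl fun k _ => ?_
      simp [hg, pow_succ, Equiv.Perm.mul_apply]
    have h1 := Finset.sum_range_succ' g p
    have h2 := Finset.sum_range_succ g p
    have hgp : g p = g 0 := by simp [hg, hσp]
    rw [hshift]
    have := h1.symm.trans h2
    rw [hgp] at this
    exact add_right_cancel this
  -- cycle sums
  have hcyclesum : ∀ (j : Fin n) (k : ℕ),
      ∑ i ∈ univ.filter (fun i => σ.SameCycle j i), v ((σ ^ k) i)
        = ∑ i ∈ univ.filter (fun i => σ.SameCycle j i), v i := by
    intro j k
    refine Finset.sum_equiv (σ ^ k : Equiv.Perm (Fin n)) (fun i => ?_) (fun i _ => rfl)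
    simp only [mem_filter, mem_univ, true_and]
    exact (Equiv.Perm.sameCycle_pow_right).symm
  have hesum : ∀ j : Fin n, ∑ i ∈ univ.filter (fun i => σ.SameCycle j i), e i = 0 := by
    intro j
    have hfs : ∑ i ∈ univ.filter (fun i => σ.SameCycle j i), f i
        = ∑ i ∈ univ.filter (fun i => σ.SameCycle j i), v i := by
      rw [hf]
      rw [Finset.sum_comm' (t' := range p) (s' := fun _ => univ.filter (fun i => σ.SameCycle j i))]
      · simp only [hcyclesum j]
        rw [Finset.sum_const, card_range, nsmul_eq_mul, hp2, one_mul]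
      · intro x y; tauto
    simp only [he, Pi.add_apply, Finset.sum_add_distrib, hfs]
    have : ∀ x : ZMod 2, x + x = 0 := by decide
    exact this _
  have heven : ∀ j : Fin n, Even (Nat.card {i : Fin n // σ.SameCycle j i ∧ e i ≠ 0}) := by
    intro j
    exact (aux_even_iff (fun i => σ.SameCycle j i) e).mpr (hesum j)
  refine ⟨(f, e), ⟨hfC, heC, hfix, heven, ?_⟩, ?_⟩
  · funext i; exact (hzadd (v i) (f i)).symm
  · rintro ⟨f2, e2⟩ ⟨hf2C, he2C, hfix2, hev2, heq2⟩
    -- let w = f2 + f; show w = 0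
    set w : Fin n → ZMod 2 := f2 + f with hw
    have hwfixed : ∀ i, w (σ i) = w i := by
      intro i
      have h1 := congrFun hfix2 i
      have h2 := congrFun hfix i
      simp only [Function.comp_apply] at h1 h2
      simp [hw, h1, h2]
    have hwpow : ∀ (k : ℕ) (i : Fin n), w ((σ ^ k) i) = w i := by
      intro k
      induction k with
      | zero => simp
      | succ k ih =>
        intro i
        have : (σ ^ (k + 1)) i = (σ ^ k) (σ i) := by
          simp [pow_succ, Equiv.Perm.mul_apply]
        rw [this, ih, hwfixed]
    have hwconst : ∀ j i : Fin n, σ.SameCycle j i → w i = w j := by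
      intro j i hsc
      obtain ⟨k, _, hk⟩ := hsc.exists_pow_eq'
      rw [← hk, hwpow]
    -- w = e + e2
    have hwe : w = e + e2 := by
      funext i
      have h1 := congrFun heq2 i
      simp only [Pi.add_apply] at h1
      simp only [hw, he, Pi.add_apply]
      have key : ∀ a b c d : ZMod 2, a = b + c → b + d = a + d + c := by decide
      exact key _ _ _ _ h1
    have hwsum : ∀ j : Fin n, ∑ i ∈ univ.filter (fun i => σ.SameCycle j i), w i = 0 := by
      intro j
      have h2 := (aux_even_iff (fun i => σ.SameCycle j i) e2).mp (hev2 j)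
      rw [hwe]
      simp only [Pi.add_apply, Finset.sum_add_distrib, hesum j, h2, add_zero]
    have hwzero : w = 0 := by
      funext j
      have hsum := hwsum j
      have hconst : ∑ i ∈ univ.filter (fun i => σ.SameCycle j i), w i
          = ((univ.filter (fun i => σ.SameCycle j i)).card : ZMod 2) * w j := by
        rw [Finset.sum_congr rfl (fun i hi => hwconst j i (by simpa using hi))]
        rw [Finset.sum_const, nsmul_eq_mul]
      have hodd' : Odd ((univ.filter (fun i => σ.SameCycle j i)).card) := by
        have := aux_odd_card hp hodd σ hord j
        rwa [Nat.card_eq_fintype_card, Fintype.card_subtype] at this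
      have hcast : (((univ.filter (fun i => σ.SameCycle j i)).card : ℕ) : ZMod 2) = 1 := by
        obtain ⟨m, hm⟩ := hodd'
        rw [hm]; push_cast
        have : (2 : ZMod 2) = 0 := by decide
        rw [this]; ring
      rw [hconst, hcast, one_mul] at hsum
      exact hsum
    have hf2 : f2 = f := by
      funext i
      exact hzcancel _ _ (congrFun hwzero i)
    have he2 : e2 = e := by
      funext i
      have h1 := congrFun heq2 i
      have h2 : v i = f i + e i := by
        have : ∀ x y : ZMod 2, x = y + (x + y) := by decide
        exact this (v i) (f i)
      rw [hf2] at h1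
      simp only [Pi.add_apply] at h1 h2
      have : ∀ a b c : ZMod 2, a + b = a + c → b = c := by decide
      exact this _ _ _ (h1.symm.trans h2)
    rw [Prod.mk.injEq]
    exact ⟨hf2, he2⟩
end

section
/- Let C be a binary linear code of length n invariant under a permutation σ of prime order p. For each i, let A_i be the number of codewords of C of weight i, and let A'_i be the number of codewords of weight i in the fixed subcode F_σ(C) = {v ∈ C : vσ = v}. Then A_i ≡ A'_i (mod p) for every i. -/
lemma hammingNorm_comp_perm {n : ℕ} (v : Fin n → ZMod 2) (e : Equiv.Perm (Fin n)) :
    hammingNorm (v ∘ e) = hammingNorm v := by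
  classical
  simp only [hammingNorm, Function.comp]
  exact Finset.card_equiv e (by simp)

lemma mem_comp_pow {n : ℕ} (σ : Equiv.Perm (Fin n))
    (C : Submodule (ZMod 2) (Fin n → ZMod 2))
    (hinv : ∀ v ∈ C, v ∘ σ ∈ C) (k : ℕ) :
    ∀ v ∈ C, v ∘ ⇑(σ ^ k) ∈ C := by
  induction k with
  | zero => intro v hv; simpa using hv
  | succ k ih =>
    intro v hv
    have : v ∘ ⇑(σ ^ (k + 1)) = (v ∘ ⇑(σ ^ k)) ∘ ⇑σ := by
      rw [pow_succ]; rfl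
    rw [this]
    exact hinv _ (ih v hv)

/-- If a binary linear code `C` is invariant under a permutation `σ` of prime order `p`,
then the number of codewords of weight `i` in `C` is congruent mod `p` to the number of
codewords of weight `i` in the fixed subcode `F_σ(C)`. -/
theorem stmt_1 (n p : ℕ) (hp : p.Prime)
    (σ : Equiv.Perm (Fin n)) (hord : orderOf σ = p)
    (C : Submodule (ZMod 2) (Fin n → ZMod 2))
    (hinv : ∀ v ∈ C, v ∘ σ ∈ C) (i : ℕ) :
    Nat.card {v : Fin n → ZMod 2 // v ∈ C ∧ hammingNorm v = i} ≡
    Nat.card {v : Fin n → ZMod 2 // v ∈ C ∧ v ∘ σ = v ∧ hammingNorm v = i} [MOD p] := by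
  classical
  haveI : Fact p.Prime := ⟨hp⟩
  -- every "z-power" of σ preserves C
  have hmemz : ∀ (τ : Equiv.Perm (Fin n)), τ ∈ Subgroup.zpowers σ →
      ∀ v ∈ C, v ∘ ⇑τ ∈ C := by
    intro τ hτ v hv
    obtain ⟨z, hz⟩ := Subgroup.mem_zpowers_iff.mp hτ
    have hz' : σ ^ ((z % (p : ℤ)).toNat) = τ := by
      rw [← hz, ← zpow_natCast, Int.toNat_of_nonneg
        (Int.emod_nonneg _ (by exact_mod_cast hp.ne_zero)), ← hord, zpow_mod_orderOf]
    rw [← hz']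
    exact mem_comp_pow σ C hinv _ v hv
  set G := Subgroup.zpowers σ with hG
  have hcardG : Nat.card G = p := by rw [Nat.card_zpowers, hord]
  have hpG : IsPGroup p G := IsPGroup.of_card (by rw [hcardG, pow_one])
  set S := {v : Fin n → ZMod 2 // v ∈ C ∧ hammingNorm v = i} with hS
  -- action of G on S : τ • v = v ∘ τ⁻¹
  letI : SMul G S := ⟨fun τ v => ⟨v.1 ∘ ⇑(τ⁻¹ : G).1,
    hmemz _ (τ⁻¹ : G).2 v.1 v.2.1,
    by rw [hammingNorm_comp_perm]; exact v.2.2⟩⟩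
  have smul_def : ∀ (τ : G) (v : S), (τ • v).1 = v.1 ∘ ⇑(τ⁻¹ : G).1 := fun _ _ => rfl
  letI : MulAction G S :=
    { one_smul := by
        intro v; apply Subtype.ext; rw [smul_def]; simp
      mul_smul := by
        intro τ₁ τ₂ v; apply Subtype.ext
        rw [smul_def, smul_def, smul_def]
        simp only [mul_inv_rev]
        rfl }
  haveI : Finite S := Subtype.finite
  have key := hpG.card_modEq_card_fixedPoints S
  have e : MulAction.fixedPoints G S ≃
      {v : Fin n → ZMod 2 // v ∈ C ∧ v ∘ σ = v ∧ hammingNorm v = i} := by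
    refine Equiv.ofBijective (fun v => ⟨v.1.1, v.1.2.1, ?_, v.1.2.2⟩) ⟨?_, ?_⟩
    · -- v.1 ∘ σ = v.1
      have hfix := v.2 (⟨σ, Subgroup.mem_zpowers σ⟩ : G)
      have h1 : v.1.1 ∘ ⇑(σ⁻¹) = v.1.1 := by
        have := congrArg Subtype.val hfix
        rw [smul_def] at this
        exact this
      funext x
      have := congrFun h1 (σ x)
      simpa using this.symm
    · intro a b hab
      simp only [Subtype.mk.injEq] at hab
      exact Subtype.ext (Subtype.ext hab)
    · rintro ⟨v, hv, hfix, hw⟩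
      refine ⟨⟨⟨v, hv, hw⟩, ?_⟩, rfl⟩
      intro τ
      apply Subtype.ext
      rw [smul_def]
      obtain ⟨z, hz⟩ := Subgroup.mem_zpowers_iff.mp (τ⁻¹ : G).2
      have hfixn : ∀ k : ℕ, v ∘ ⇑(σ ^ k) = v := by
        intro k
        induction k with
        | zero => simp
        | succ k ih =>
          have : v ∘ ⇑(σ ^ (k + 1)) = (v ∘ ⇑(σ ^ k)) ∘ ⇑σ := by rw [pow_succ]; rfl
          rw [this, ih]
          funext x
          exact congrFun hfix x
      have hz' : σ ^ ((z % (p : ℤ)).toNat) = ((τ⁻¹ : G) : Equiv.Perm (Fin n)) := by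
        rw [← hz, ← zpow_natCast, Int.toNat_of_nonneg
          (Int.emod_nonneg _ (by exact_mod_cast hp.ne_zero)), ← hord, zpow_mod_orderOf]
      rw [← hz', hfixn]
  calc Nat.card S ≡ Nat.card (MulAction.fixedPoints G S) [MOD p] := key
    _ = _ := Nat.card_congr e
end

section
/- Let C ⊆ F_2^n be a self-dual binary code (C = C^⊥ with respect to the standard bilinear form), and suppose C has a generator decomposition with respect to a split of the coordinates into a block of size c and a block of size f: let C_1 be the subcode of codewords supported on the first c coordinates (with dimension k_1 as a code of length c) and C_2 the subcode supported on the last f coordinates (with dimension k_2). Then k_1 − c/2 = k_2 − f/2 (Balance Principle); equivalently 2k_1 + f = 2k_2 + c. -/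
open LinearMap Matrix Module Submodule

/-!
Let `K₁`, `K₂` be the words supported on the first `c` and on the last `f` coordinates.
For the nondegenerate dot product `K₂ᗮ = K₁`, so `C ⊓ K₁ = Cᗮ ⊓ K₂ᗮ = (C ⊔ K₂)ᗮ`.
Counting dimensions with `dim C = (c + f) / 2` gives
`k₁ = (c + f) - (dim C + f - k₂)`, which is the balance principle.
-/

namespace LinearMap.BilinForm

variable {K V : Type*} [Field K] [AddCommGroup V] [Module K V]

theorem orthogonal_sup (B : LinearMap.BilinForm K V) (U W : Submodule K V) :
    B.orthogonal (U ⊔ W) = B.orthogonal U ⊓ B.orthogonal W := by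
  refine le_antisymm (le_inf (orthogonal_le le_sup_left) (orthogonal_le le_sup_right)) ?_
  rintro x ⟨hxU, hxW⟩ y hy
  obtain ⟨u, hu, w, hw, rfl⟩ := mem_sup.1 hy
  rw [map_add, LinearMap.add_apply, hxU u hu, hxW w hw, add_zero]

variable [FiniteDimensional K V] {B : LinearMap.BilinForm K V}

theorem finrank_eq_two_mul_of_orthogonal_eq_self (hB : B.Nondegenerate) {C : Submodule K V}
    (hC : B.orthogonal C = C) : finrank K V = 2 * finrank K C := by
  have h := finrank_orthogonal hB C
  rw [hC] at h
  have := C.finrank_le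
  omega

theorem finrank_inf_orthogonal_add_finrank_of_orthogonal_eq_self (hB : B.Nondegenerate)
    {C : Submodule K V} (hC : B.orthogonal C = C) (U : Submodule K V) :
    finrank K ↥(C ⊓ B.orthogonal U) + finrank K U = finrank K C + finrank K ↥(C ⊓ U) := by
  have hdim := finrank_eq_two_mul_of_orthogonal_eq_self hB hC
  have hsup := finrank_orthogonal hB (C ⊔ U)
  rw [orthogonal_sup, hC] at hsup
  have := finrank_sup_add_finrank_inf_eq C U
  have := (C ⊔ U).finrank_le
  omega

end LinearMap.BilinForm

namespace LinearMap

variable {K ι : Type*} [Field K]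

theorem mem_ker_funLeft_subtype_val {p : ι → Prop} {x : ι → K} :
    x ∈ ker (funLeft K K (Subtype.val : {i // p i} → ι)) ↔ ∀ i, p i → x i = 0 := by
  simp only [mem_ker, funext_iff, funLeft_apply, Pi.zero_apply, Subtype.forall]

theorem finrank_ker_funLeft_subtype_val_add_card [Fintype ι] (p : ι → Prop) [DecidablePred p] :
    finrank K ↥(ker (funLeft K K (Subtype.val : {i // p i} → ι))) + Fintype.card {i // p i} =
      Fintype.card ι := by
  have h := finrank_range_add_finrank_ker (funLeft K K (Subtype.val : {i // p i} → ι))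
  rw [range_eq_top.2 (funLeft_surjective_of_injective _ _ _ Subtype.val_injective),
    finrank_top, finrank_pi, finrank_pi] at h
  omega

end LinearMap

namespace Matrix

variable {K ι : Type*} [Field K] [Fintype ι]

theorem dotProductBilin_nondegenerate :
    BilinForm.Nondegenerate (dotProductBilin K K : (ι → K) →ₗ[K] (ι → K) →ₗ[K] K) :=
  ⟨fun x hx => dotProduct_eq_zero_iff.1 hx,
    fun y hy => dotProduct_eq_zero_iff.1 fun x => by rw [dotProduct_comm]; exact hy x⟩

theorem dotProductBilin_orthogonal_ker_funLeft_subtype_val {p q : ι → Prop}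
    (hpq : ∀ i, q i ↔ ¬p i) :
    BilinForm.orthogonal (dotProductBilin K K)
        (ker (funLeft K K (Subtype.val : {i // p i} → ι))) =
      ker (funLeft K K (Subtype.val : {i // q i} → ι)) := by
  classical
  ext x
  simp only [BilinForm.mem_orthogonal_iff, mem_ker_funLeft_subtype_val,
    dotProductBilin_apply_apply]
  constructor
  · intro h i hi
    have hsingle : ∀ j, p j → (Pi.single i 1 : ι → K) j = 0 := fun j hj =>
      Pi.single_eq_of_ne (by rintro rfl; exact (hpq j).1 hi hj) _
    simpa using h (Pi.single i 1) hsingle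
  · intro h y hy
    refine Finset.sum_eq_zero fun i _ => ?_
    by_cases hi : p i
    · rw [hy i hi, zero_mul]
    · rw [h i ((hpq i).2 hi), mul_zero]

end Matrix

/-- Balance principle: if `C ⊆ F₂^(c+f)` is self-dual, `C₁` is the subcode of words
supported on the first `c` coordinates (dimension `k₁`) and `C₂` the subcode supported
on the last `f` coordinates (dimension `k₂`), then `2k₁ + f = 2k₂ + c`
(equivalently `k₁ − c/2 = k₂ − f/2`). -/
theorem stmt_14 (c f : ℕ) (C : Submodule (ZMod 2) (Fin (c + f) → ZMod 2))
    (hsd : ∀ x, x ∈ C ↔ ∀ y ∈ C, ∑ i, x i * y i = 0) :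
    2 * Module.finrank (ZMod 2)
        ↥(C ⊓ LinearMap.ker (LinearMap.funLeft (ZMod 2) (ZMod 2)
            (Subtype.val : {i : Fin (c + f) // c ≤ (i : ℕ)} → Fin (c + f)))) + f
    = 2 * Module.finrank (ZMod 2)
        ↥(C ⊓ LinearMap.ker (LinearMap.funLeft (ZMod 2) (ZMod 2)
            (Subtype.val : {i : Fin (c + f) // (i : ℕ) < c} → Fin (c + f)))) + c := by
  set B : LinearMap.BilinForm (ZMod 2) (Fin (c + f) → ZMod 2) := dotProductBilin (ZMod 2) (ZMod 2)
  set K₁ := ker (funLeft (ZMod 2) (ZMod 2)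
    (Subtype.val : {i : Fin (c + f) // c ≤ (i : ℕ)} → Fin (c + f)))
  set K₂ := ker (funLeft (ZMod 2) (ZMod 2)
    (Subtype.val : {i : Fin (c + f) // (i : ℕ) < c} → Fin (c + f)))
  have hC : B.orthogonal C = C := by
    ext x
    simp only [BilinForm.mem_orthogonal_iff, B, dotProductBilin_apply_apply, dotProduct,
      mul_comm, hsd x]
  have hK : B.orthogonal K₂ = K₁ :=
    dotProductBilin_orthogonal_ker_funLeft_subtype_val fun _ => Nat.not_lt.symm
  have hbalance := BilinForm.finrank_inf_orthogonal_add_finrank_of_orthogonal_eq_self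
    dotProductBilin_nondegenerate hC K₂
  have hdimC := BilinForm.finrank_eq_two_mul_of_orthogonal_eq_self dotProductBilin_nondegenerate hC
  have hdimK₂ : finrank (ZMod 2) K₂ + c = c + f := by
    simpa [Fintype.card_fin_lt_of_le (Nat.le_add_right c f)] using
      finrank_ker_funLeft_subtype_val_add_card (K := ZMod 2) fun i : Fin (c + f) => (i : ℕ) < c
  rw [hK] at hbalance
  rw [finrank_pi, Fintype.card_fin] at hdimC
  omega
end

section
/- Let C be a self-dual binary [n, n/2, d] code with an automorphism σ of odd prime order p having c cycles of length p and f fixed points, where c = f and p + c < d. Then no such automorphism exists; i.e., a self-dual code of minimum distance d admits no automorphism of type p-(c;c) with p + c < d. -/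
/-!
Let `Ω` be the set of orbits of `G = ⟨σ⟩` and let `U ≤ 𝔽₂^Ω` consist of the functions whose lift
to the coordinates lies in `C` (the projection of the `σ`-fixed subcode). Every orbit has odd size,
so lifting preserves dot products, and averaging over `G` shows that a lift orthogonal to the
invariant codewords is orthogonal to all of `C`, hence lies in `C`. Thus `U^⊥ ≤ U` and
`dim U ≥ |Ω| / 2 = c`. Asking a vector of `U` to vanish on all moved orbits but one imposes only
`c - 1` conditions, so some nonzero `u ∈ U` does; its lift is a nonzero codeword supported on the
`c` fixed points and one `p`-cycle, of weight at most `p + c < d`.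
-/

open Finset Module

section Fibers
variable {α β : Type*} [Fintype α] [DecidableEq β] (π : α → β)

theorem sum_comp_eq_sum_card_fiber_smul [Fintype β] {M : Type*} [AddCommMonoid M] (f : β → M) :
    ∑ a, f (π a) = ∑ b, #{a | π a = b} • f b := by
  rw [← sum_fiberwise univ π]
  refine sum_congr rfl fun b _ => ?_
  rw [← sum_const]
  exact sum_congr rfl fun a ha => by rw [(mem_filter.mp ha).2]

theorem sum_comp_eq_sum_of_odd_card_fiber [Fintype β] (hπ : ∀ b, Odd #{a | π a = b})
    (f : β → ZMod 2) :
    ∑ a, f (π a) = ∑ b, f b := by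
  rw [sum_comp_eq_sum_card_fiber_smul]
  refine sum_congr rfl fun b _ => ?_
  rw [nsmul_eq_mul, ZMod.natCast_eq_one_iff_odd.mpr (hπ b), one_mul]

theorem card_filter_comp_eq_sum_card_fiber (S : Finset β) :
    #{a | π a ∈ S} = ∑ b ∈ S, #{a | π a = b} := by
  rw [card_eq_sum_card_fiberwise (s := {a | π a ∈ S}) (t := S) (f := π)
    fun a ha => (mem_filter.mp ha).2]
  refine sum_congr rfl fun b hb => congrArg card ?_
  ext a
  simp only [mem_filter, mem_univ, true_and, and_iff_right_iff_imp]
  exact fun h => h ▸ hb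

theorem card_filter_comp_eq_card_mul {S : Finset β} {k : ℕ}
    (h : ∀ b ∈ S, #{a | π a = b} = k) :
    #{a | π a ∈ S} = #S * k := by
  rw [card_filter_comp_eq_sum_card_fiber, sum_congr rfl h, sum_const, smul_eq_mul]

theorem hammingNorm_comp_le_sum_card_fiber {R : Type*} [Zero R] [DecidableEq R] {u : β → R}
    {S : Finset β} (hu : ∀ b ∉ S, u b = 0) :
    hammingNorm (u ∘ π) ≤ ∑ b ∈ S, #{a | π a = b} := by
  rw [← card_filter_comp_eq_sum_card_fiber]
  refine card_le_card fun a ha => ?_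
  simp only [mem_filter, mem_univ, true_and, Function.comp_apply] at ha ⊢
  exact not_imp_comm.mp (hu (π a)) ha

end Fibers

theorem LinearMap.BilinForm.finrank_le_two_mul_finrank_of_orthogonal_le {K V : Type*} [Field K]
    [AddCommGroup V] [Module K V] [FiniteDimensional K V] {B : LinearMap.BilinForm K V}
    {W : Submodule K V} (hW : B.orthogonal W ≤ W) : finrank K V ≤ 2 * finrank K W := by
  have := B.finrank_add_finrank_orthogonal' W
  have := Submodule.finrank_mono hW
  omega

theorem Submodule.exists_ne_zero_forall_notMem_eq_zero {K ι : Type*} [Field K] [Fintype ι]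
    (U : Submodule K (ι → K)) (S : Finset ι) (h : Fintype.card ι < #S + finrank K U) :
    ∃ u ∈ U, u ≠ 0 ∧ ∀ i ∉ S, u i = 0 := by
  classical
  let restrict : U →ₗ[K] ({i // i ∉ S} → K) :=
    (LinearMap.funLeft K K Subtype.val).comp U.subtype
  have hlt : finrank K ({i // i ∉ S} → K) < finrank K U := by
    rw [finrank_fintype_fun_eq_card, Fintype.card_subtype_compl, Fintype.card_coe]
    have := card_le_univ S
    omega
  obtain ⟨⟨u, hu⟩, hker, hne⟩ := Submodule.exists_mem_ne_zero_of_ne_bot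
    (LinearMap.ker_ne_bot_of_finrank_lt hlt)
  refine ⟨u, hu, fun h => hne (by simp [h]), fun i hi => ?_⟩
  exact congrFun (LinearMap.mem_ker.mp hker : restrict ⟨u, hu⟩ = 0) ⟨i, hi⟩

theorem mem_of_forall_invariant_dotProduct_eq_zero {G α : Type*} [Group G] [Fintype G]
    [MulAction G α] [Fintype α] (hG : Odd (Nat.card G)) {C : Submodule (ZMod 2) (α → ZMod 2)}
    (hsd : ∀ x, x ∈ C ↔ ∀ y ∈ C, x ⬝ᵥ y = 0)
    (hC : ∀ g : G, ∀ v ∈ C, (fun a => v (g • a)) ∈ C)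
    {x : α → ZMod 2} (hx : ∀ (g : G) a, x (g • a) = x a)
    (horth : ∀ y ∈ C, (∀ (g : G) a, y (g • a) = y a) → x ⬝ᵥ y = 0) : x ∈ C := by
  refine (hsd x).mpr fun w hw => ?_
  -- average `w` over `G`; pairing with the `G`-invariant `x` multiplies by `|G|`, which is odd
  let avg : α → ZMod 2 := ∑ g : G, fun a => w (g • a)
  have havg_mem : avg ∈ C := C.sum_mem fun g _ => hC g w hw
  have havg_inv : ∀ (h : G) a, avg (h • a) = avg a := by
    intro h a
    simp only [avg, Finset.sum_apply, smul_smul]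
    exact Fintype.sum_equiv (Equiv.mulRight h) _ _ fun _ => rfl
  have hpair : ∀ g : G, (x ⬝ᵥ fun a => w (g • a)) = x ⬝ᵥ w := fun g =>
    Fintype.sum_equiv (MulAction.toPerm g) _ _ fun a => by simp [hx]
  have := horth avg havg_mem havg_inv
  rwa [dotProduct_sum, sum_congr rfl fun g _ => hpair g, sum_const, card_univ,
    ← Nat.card_eq_fintype_card, nsmul_eq_mul, ZMod.natCast_eq_one_iff_odd.mpr hG, one_mul] at this

namespace MulAction

variable {G α : Type*} [Group G] [MulAction G α]

theorem orbitRel.Quotient.mk_smul (g : G) (a : α) :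
    (Quotient.mk'' (g • a) : orbitRel.Quotient G α) = Quotient.mk'' a :=
  Quotient.sound' (MulAction.mem_orbit a g)

variable [Fintype α] [DecidableEq (orbitRel.Quotient G α)]

theorem card_fiber_orbitMk (a : α) :
    #{b | (Quotient.mk'' b : orbitRel.Quotient G α) = Quotient.mk'' a} = Nat.card (orbit G a) := by
  have hfiber : ((univ.filter fun b => (Quotient.mk'' b : orbitRel.Quotient G α) =
      Quotient.mk'' a : Finset α) : Set α) = orbit G a := by
    ext b
    simp [Quotient.eq'', orbitRel_apply]
  rw [← hfiber, Nat.card_coe_set_eq, Set.ncard_coe_finset]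

theorem card_fiber_orbitMk_dvd [Finite G] (ω : orbitRel.Quotient G α) :
    #{b | Quotient.mk'' b = ω} ∣ Nat.card G := by
  induction ω using Quotient.inductionOn' with
  | h a =>
    rw [card_fiber_orbitMk, Nat.card_coe_set_eq, ← index_stabilizer]
    exact (stabilizer G a).index_dvd_card

theorem orthogonal_comap_funLeft_orbitMk_le [Fintype G] (hG : Odd (Nat.card G))
    [Fintype (orbitRel.Quotient G α)] {C : Submodule (ZMod 2) (α → ZMod 2)}
    (hsd : ∀ x, x ∈ C ↔ ∀ y ∈ C, x ⬝ᵥ y = 0)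
    (hC : ∀ g : G, ∀ v ∈ C, (fun a => v (g • a)) ∈ C) :
    LinearMap.BilinForm.orthogonal (dotProductBilin (ZMod 2) (ZMod 2))
        (C.comap (LinearMap.funLeft (ZMod 2) (ZMod 2) Quotient.mk'')) ≤
      C.comap (LinearMap.funLeft (ZMod 2) (ZMod 2)
        (Quotient.mk'' : α → orbitRel.Quotient G α)) := by
  intro u hu
  refine mem_of_forall_invariant_dotProduct_eq_zero hG hsd hC
    (fun g a => congrArg u (orbitRel.Quotient.mk_smul g a)) fun y hy hy_inv => ?_
  let v : orbitRel.Quotient G α → ZMod 2 :=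
    Quotient.lift (s := orbitRel G α) y fun _ b ⟨g, hg⟩ => hg ▸ hy_inv g b
  calc LinearMap.funLeft (ZMod 2) (ZMod 2) Quotient.mk'' u ⬝ᵥ y
      = ∑ ω, u ω * v ω :=
        sum_comp_eq_sum_of_odd_card_fiber _ (fun ω => hG.of_dvd_nat (card_fiber_orbitMk_dvd ω))
          fun ω => u ω * v ω
    _ = v ⬝ᵥ u := dotProduct_comm u v
    _ = 0 := hu v hy

theorem exists_mem_ne_zero_hammingNorm_le_sum_card_fiber [Fintype G] (hG : Odd (Nat.card G))
    [Fintype (orbitRel.Quotient G α)] {C : Submodule (ZMod 2) (α → ZMod 2)}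
    (hsd : ∀ x, x ∈ C ↔ ∀ y ∈ C, x ⬝ᵥ y = 0)
    (hC : ∀ g : G, ∀ v ∈ C, (fun a => v (g • a)) ∈ C)
    (S : Finset (orbitRel.Quotient G α)) (hS : Fintype.card (orbitRel.Quotient G α) < 2 * #S) :
    ∃ v ∈ C, v ≠ 0 ∧ hammingNorm v ≤ ∑ ω ∈ S, #{a | Quotient.mk'' a = ω} := by
  set L := LinearMap.funLeft (ZMod 2) (ZMod 2) (Quotient.mk'' : α → orbitRel.Quotient G α)
  have hdim : Fintype.card (orbitRel.Quotient G α) ≤ 2 * finrank (ZMod 2) (C.comap L) := by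
    rw [← finrank_fintype_fun_eq_card (ZMod 2)]
    exact LinearMap.BilinForm.finrank_le_two_mul_finrank_of_orthogonal_le
      (orthogonal_comap_funLeft_orbitMk_le hG hsd hC)
  obtain ⟨u, hu, hu0, hSu⟩ := Submodule.exists_ne_zero_forall_notMem_eq_zero
    (ι := orbitRel.Quotient G α) (C.comap L) S (by linarith)
  refine ⟨L u, hu, fun h => hu0 ?_, hammingNorm_comp_le_sum_card_fiber _ hSu⟩
  exact LinearMap.funLeft_injective_of_surjective _ _ _ Quotient.mk''_surjective
    (h.trans (map_zero L).symm)

end MulAction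

open MulAction Subgroup

namespace Equiv.Perm

variable {α : Type*} (σ : Perm α)

theorem comp_pow_mem {R : Type*} [Semiring R] {C : Submodule R (α → R)}
    (hσC : ∀ v ∈ C, v ∘ σ ∈ C) {v : α → R} (hv : v ∈ C) (k : ℕ) :
    v ∘ ⇑(σ ^ k) ∈ C := by
  induction k with
  | zero => exact hv
  | succ k ih => simpa only [pow_succ, coe_mul, ← Function.comp_assoc] using hσC _ ih

theorem smul_zpowers_mem [Finite α] {R : Type*} [Semiring R] {C : Submodule R (α → R)}
    (hσC : ∀ v ∈ C, v ∘ σ ∈ C) (g : zpowers σ) {v : α → R} (hv : v ∈ C) :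
    (fun a => v (g • a)) ∈ C := by
  obtain ⟨g, hg⟩ := g
  obtain ⟨k, rfl⟩ := mem_powers_iff_mem_zpowers.mpr hg
  exact σ.comp_pow_mem hσC hv k

theorem mem_fixedPoints_zpowers_iff {a : α} : a ∈ fixedPoints (zpowers σ) α ↔ σ a = a := by
  refine ⟨fun h => h ⟨σ, mem_zpowers σ⟩, fun h g => ?_⟩
  obtain ⟨g, k, rfl⟩ := g
  exact zpow_apply_eq_self_of_apply_eq_self h k

variable [Fintype α]

section Orbits

variable [DecidableEq (orbitRel.Quotient (zpowers σ) α)]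

theorem card_fiber_orbitMk_zpowers_eq_one_iff (a : α) :
    #{b | (Quotient.mk'' b : orbitRel.Quotient (zpowers σ) α) = Quotient.mk'' a} = 1 ↔
      σ a = a := by
  classical
  rw [card_fiber_orbitMk, Nat.card_eq_fintype_card, ← mem_fixedPoints_iff_card_orbit_eq_one,
    mem_fixedPoints_zpowers_iff]

theorem card_fiber_orbitMk_zpowers_eq_one_or_eq (hσ : (orderOf σ).Prime)
    (ω : orbitRel.Quotient (zpowers σ) α) :
    #{b | Quotient.mk'' b = ω} = 1 ∨ #{b | Quotient.mk'' b = ω} = orderOf σ :=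
  hσ.eq_one_or_self_of_dvd _ (Nat.card_zpowers σ ▸ card_fiber_orbitMk_dvd ω)

variable [DecidableEq α] [Fintype (orbitRel.Quotient (zpowers σ) α)]

theorem card_filter_card_fiber_orbitMk_zpowers_eq_one :
    #{ω : orbitRel.Quotient (zpowers σ) α | #{b | Quotient.mk'' b = ω} = 1} =
      #{a | σ a = a} := by
  rw [← mul_one #{ω : orbitRel.Quotient (zpowers σ) α | _},
    ← card_filter_comp_eq_card_mul Quotient.mk'' fun ω hω => (mem_filter.mp hω).2]
  refine congrArg card (filter_congr fun a _ => ?_)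
  rw [mem_filter, card_fiber_orbitMk_zpowers_eq_one_iff, and_iff_right (mem_univ _)]

theorem card_eq_card_fixed_add_orderOf_mul (hσ : (orderOf σ).Prime) :
    Fintype.card α = #{a | σ a = a} +
      #{ω : orbitRel.Quotient (zpowers σ) α | #{b | Quotient.mk'' b = ω} ≠ 1} * orderOf σ := by
  have hmoved := card_filter_comp_eq_card_mul (k := orderOf σ) Quotient.mk''
    (S := {ω : orbitRel.Quotient (zpowers σ) α | #{b | Quotient.mk'' b = ω} ≠ 1})
    fun ω hω =>
      (σ.card_fiber_orbitMk_zpowers_eq_one_or_eq hσ ω).resolve_left (mem_filter.mp hω).2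
  rw [← hmoved, ← card_univ, ← card_filter_add_card_filter_not (s := univ) fun a => σ a = a]
  refine congrArg _ (congrArg card (filter_congr fun a _ => ?_))
  rw [mem_filter, Ne, card_fiber_orbitMk_zpowers_eq_one_iff, and_iff_right (mem_univ _)]

end Orbits

theorem exists_mem_ne_zero_hammingNorm_le_orderOf_add [DecidableEq α] (hσ : (orderOf σ).Prime)
    (hodd : Odd (orderOf σ)) {C : Submodule (ZMod 2) (α → ZMod 2)}
    (hsd : ∀ x, x ∈ C ↔ ∀ y ∈ C, x ⬝ᵥ y = 0) (hσC : ∀ v ∈ C, v ∘ σ ∈ C)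
    (hcard : Fintype.card α ≤ (orderOf σ + 1) * #{a | σ a = a}) :
    ∃ v ∈ C, v ≠ 0 ∧ hammingNorm v ≤ orderOf σ + #{a | σ a = a} := by
  classical
  let size (ω : orbitRel.Quotient (zpowers σ) α) : ℕ := #{b | Quotient.mk'' b = ω}
  let fixedOrbits : Finset (orbitRel.Quotient (zpowers σ) α) := {ω | size ω = 1}
  have hfixed : #fixedOrbits = #{a | σ a = a} := σ.card_filter_card_fiber_orbitMk_zpowers_eq_one
  have hmoved : #{ω | ¬ size ω = 1} ≤ #{a | σ a = a} := by
    have := σ.card_eq_card_fixed_add_orderOf_mul hσ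
    exact Nat.le_of_mul_le_mul_right (by linarith) hσ.pos
  have horbits : Fintype.card (orbitRel.Quotient (zpowers σ) α) =
      #fixedOrbits + #{ω | ¬ size ω = 1} :=
    (card_filter_add_card_filter_not (s := univ) _).symm
  obtain ⟨a, ha⟩ : ∃ a, σ a ≠ a := by
    by_contra! h
    exact hσ.ne_one (by rw [show σ = 1 from Equiv.ext h, orderOf_one])
  have ha_size : size (Quotient.mk'' a) = orderOf σ :=
    (σ.card_fiber_orbitMk_zpowers_eq_one_or_eq hσ _).resolve_left
      (mt (σ.card_fiber_orbitMk_zpowers_eq_one_iff a).mp ha)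
  have ha_notMem : Quotient.mk'' a ∉ fixedOrbits := by
    simpa [fixedOrbits, ha_size] using hσ.ne_one
  obtain ⟨v, hvC, hv0, hwt⟩ := exists_mem_ne_zero_hammingNorm_le_sum_card_fiber
    (Nat.card_zpowers σ ▸ hodd) hsd (σ.smul_zpowers_mem hσC)
    (insert (Quotient.mk'' a) fixedOrbits)
    (by rw [card_insert_of_notMem ha_notMem]; omega)
  refine ⟨v, hvC, hv0, hwt.trans_eq ?_⟩
  rw [sum_insert ha_notMem, sum_congr rfl fun ω hω => (mem_filter.mp hω).2, sum_const,
    smul_eq_mul, mul_one]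
  exact congrArg₂ (· + ·) ha_size hfixed

end Equiv.Perm

/-- A binary self-dual code with minimum distance `d` admits no automorphism of odd
prime order `p` with `c` `p`-cycles and `c` fixed points whenever `p + c < d`. -/
theorem stmt_15 (n p c d : ℕ) (hp : p.Prime) (hodd : Odd p)
    (C : Submodule (ZMod 2) (Fin n → ZMod 2))
    (hsd : ∀ x, x ∈ C ↔ ∀ y ∈ C, ∑ i, x i * y i = 0)
    (hmin : IsLeast {w : ℕ | ∃ v ∈ C, v ≠ 0 ∧ hammingNorm v = w} d)
    (σ : Equiv.Perm (Fin n)) (hσC : ∀ v ∈ C, v ∘ σ ∈ C)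
    (hord : orderOf σ = p)
    (hfix : Nat.card {i : Fin n // σ i = i} = c)
    (hn : n = p * c + c)
    (hlt : p + c < d) :
    False := by
  have hfixedPts : #{i | σ i = i} = c := by
    rw [← hfix, Nat.card_eq_fintype_card, Fintype.card_subtype]
  obtain ⟨v, hvC, hv0, hwt⟩ := σ.exists_mem_ne_zero_hammingNorm_le_orderOf_add (hord ▸ hp)
    (hord ▸ hodd) hsd hσC (by rw [Fintype.card_fin, hfixedPts, hord, hn, add_one_mul])
  have := hmin.2 ⟨v, hvC, hv0, rfl⟩
  rw [hord, hfixedPts] at hwt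
  omega
end
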